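/- There is an absolute constant C > 0 such that for all positive integers n, k, every finite alphabet Σ with |Σ| ≥ 2, and every real 0 < γ ≤ 1, there exists a γ-PRG Gen : {0,1}^s → ({0,1}^n)^k for (k,n,Σ) block decision trees with seed length s ≤ n + C·(k·log₂|Σ| + (1+log₂ k)·(1+log₂(1/γ))). -/

import Mathlib

open Classical

/-- Probability of `P` under the uniform distribution on a finite type. -/
noncomputable def pr {α : Type*} [Fintype α] (P : α → Prop) : ℝ :=
  ((Finset.univ.filter P).card : ℝ) / (Fintype.card α : ℝ)

/-- `f : {0,1}^n → ℝ^d` is `(ε,δ)`-concentrated at `μ`. -/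
def Concentrated (n d : ℕ) (ε δ : ℝ)
    (f : (Fin n → Bool) → Fin d → ℝ) (μ : Fin d → ℝ) : Prop :=
  pr (fun X : Fin n → Bool => ∃ j, |f X j - μ j| > ε) ≤ δ

/-- A deterministic owner for `k` rounds of `(ε,δ)`-concentrated functions
`{0,1}^n → ℝ^d`: given the history of responses `Y_1,…,Y_{i-1}`, it produces
a function `f_i` together with a point `μ_i` at which `f_i` is concentrated. -/
structure Owner (n k d : ℕ) (ε δ : ℝ) where
  act : List (Fin d → ℝ) → (((Fin n → Bool) → Fin d → ℝ) × (Fin d → ℝ))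
  conc : ∀ ys : List (Fin d → ℝ), ys.length < k →
    Concentrated n d ε δ (act ys).1 (act ys).2

/-- A one-query steward with randomness complexity `m`: in each round it chooses
a query point from its randomness and the past query answers, and it chooses a
response from its randomness and the past and current query answers. -/
structure Steward (n k d m : ℕ) where
  q : (Fin m → Bool) → List (Fin d → ℝ) → (Fin n → Bool)
  r : (Fin m → Bool) → List (Fin d → ℝ) → (Fin d → ℝ) → (Fin d → ℝ)

/-- The interaction `O ↔ S(Z)` for `i` rounds: the list of triples `(Y_i, W_i, μ_i)`. -/
noncomputable def run {n k d m : ℕ} {ε δ : ℝ} (O : Owner n k d ε δ) (S : Steward n k d m)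
    (Z : Fin m → Bool) : ℕ → List ((Fin d → ℝ) × (Fin d → ℝ) × (Fin d → ℝ))
  | 0 => []
  | i + 1 =>
    let h := run O S Z i
    let fμ := O.act (h.map fun p => p.1)
    let X := S.q Z (h.map fun p => p.2.1)
    let W := fμ.1 X
    h ++ [(S.r Z (h.map fun p => p.2.1) W, W, fμ.2)]

/-- `S` is a one-query `(ε',δ')`-steward for `k` adaptively chosen
`(ε,δ)`-concentrated functions `{0,1}^n → ℝ^d`. -/
def IsSteward (n k d m : ℕ) (ε δ ε' δ' : ℝ) (S : Steward n k d m) : Prop :=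
  ∀ O : Owner n k d ε δ,
    pr (fun Z : Fin m → Bool =>
      ∃ p ∈ run O S Z k, ∃ j : Fin d, |p.1 j - p.2.2 j| > ε') ≤ δ'

/-- The output string of a `(k,n,Σ)` block decision tree, given as the family of
node functions `v_w` indexed by strings `w`, on input the list `Xs` of blocks:
`σ_i = v_{(σ_1,…,σ_{i-1})}(X_i)`. -/
def treeOutList {A I : Type*} (v : List A → I → A) (Xs : List I) : List A :=
  Xs.foldl (fun w X => w ++ [v w X]) []

/-- `Gen` is a `γ`-PRG for `(k,n,A)` block decision trees: for every tree, the total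
variation distance between the output distribution on pseudorandom inputs and on
truly random inputs is at most `γ`. -/
def IsBDTPRG (n k s : ℕ) (A : Type*) [Fintype A] (γ : ℝ)
    (Gen : (Fin s → Bool) → Fin k → (Fin n → Bool)) : Prop :=
  ∀ v : List A → (Fin n → Bool) → A,
    (1 / 2) * ∑ σ : Fin k → A,
      |pr (fun x : Fin s → Bool => treeOutList v (List.ofFn (Gen x)) = List.ofFn σ)
        - pr (fun X : Fin k → (Fin n → Bool) => treeOutList v (List.ofFn X) = List.ofFn σ)|
      ≤ γ

/-! Choose the generator `Gen : {0,1}^s → ({0,1}^n)^k` at random. For a fixed tree and output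
string `σ`, the fraction of seeds on which the tree outputs `σ` is an average of `2^s` independent
indicators, so by Hoeffding's inequality it is `ε = 2γ/|Σ|^k`-close to the true probability
except with probability `2 exp(-2·2^s ε²)`. A tree only matters through its nodes at depth `< k`,
so there are at most `|Σ|^(2^n |Σ|^k)` of them, and a union bound over trees and `σ` succeeds once
`2^s γ² ≥ 2^n |Σ|^(4k)`, i.e. for `s = n + O(k log|Σ| + log(1/γ))`. -/

open Finset MeasureTheory ProbabilityTheory Real

section EmpiricalFrequency

variable {S D : Type*} [Fintype S] [Fintype D] [Nonempty D]

lemma pr_eq_uniformOn_real {α : Type*} [Fintype α] [MeasurableSpace α]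
    [MeasurableSingletonClass α] (P : α → Prop) :
    pr P = (uniformOn (Set.univ : Set α)).real {x | P x} := by
  rw [measureReal_def, uniformOn_univ, ENNReal.toReal_div, pr, ← coe_filter_univ,
    Measure.count_apply_finset]
  simp

lemma card_mul_pr {α : Type*} [Fintype α] (P : α → Prop) :
    Fintype.card α * pr P = ∑ x, Set.indicator {x | P x} 1 x := by
  rcases isEmpty_or_nonempty α with _ | _
  · simp
  rw [pr, mul_div_cancel₀ _ (by positivity)]
  simp [Set.indicator_apply, sum_boole]

lemma hasSubgaussianMGF_card_mul_pr_comp_sub [MeasurableSpace D] [DiscreteMeasurableSpace D]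
    (P : D → Prop) :
    HasSubgaussianMGF (fun g : S → D => Fintype.card S * (pr (fun x => P (g x)) - pr P))
      (Fintype.card S / 4) (uniformOn Set.univ) := by
  set ν := uniformOn (Set.univ : Set D)
  have hμ : uniformOn (Set.univ : Set (S → D)) = Measure.pi fun _ => ν := by
    rw [← uniformOn_pi, Set.pi_univ]
  set Z : D → ℝ := fun y => Set.indicator {y | P y} 1 y - pr P
  have hZ : HasSubgaussianMGF Z (1 / 4) ν := by
    have h := hasSubgaussianMGF_of_mem_Icc (μ := ν) (a := 0) (b := 1)
      (X := Set.indicator {y | P y} 1) (by fun_prop) (ae_of_all _ fun y => ?_)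
    · rw [integral_indicator_one (DiscreteMeasurableSpace.forall_measurableSet _),
        ← pr_eq_uniformOn_real] at h
      convert h
      norm_num
    · by_cases hy : P y <;> simp [hy]
  have hind : iIndepFun (fun x (g : S → D) => Z (g x)) (uniformOn Set.univ) :=
    hμ ▸ iIndepFun_pi fun _ => (measurable_of_countable Z).aemeasurable
  have h := HasSubgaussianMGF.sum_of_iIndepFun hind (s := univ) fun x _ =>
    HasSubgaussianMGF.of_map (X := Z) (Y := fun g : S → D => g x)
      (measurable_pi_apply x).aemeasurable (by rwa [hμ, (measurePreserving_eval _ x).map_eq])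
  convert h using 1
  · ext g
    simp only [Z, sum_sub_distrib, mul_sub, card_mul_pr, sum_const, card_univ, nsmul_eq_mul]
    rfl
  · rw [sum_const, card_univ, nsmul_eq_mul, mul_one_div]

lemma pr_le_abs_pr_comp_sub_pr [Nonempty S] (P : D → Prop) {ε : ℝ} (hε : 0 ≤ ε) :
    pr (fun g : S → D => ε ≤ |pr (fun x => P (g x)) - pr P|)
      ≤ 2 * exp (-2 * Fintype.card S * ε ^ 2) := by
  let _ : MeasurableSpace D := ⊤
  have : DiscreteMeasurableSpace D := ⟨fun _ => trivial⟩
  set N : ℝ := (Fintype.card S : ℝ)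
  have hN : 0 < N := by positivity
  have h := hasSubgaussianMGF_card_mul_pr_comp_sub (S := S) P
  calc pr (fun g : S → D => ε ≤ |pr (fun x => P (g x)) - pr P|)
      = (uniformOn Set.univ).real
          ({g : S → D | N * ε ≤ N * (pr (fun x => P (g x)) - pr P)}
            ∪ {g | N * ε ≤ (-fun g : S → D => N * (pr (fun x => P (g x)) - pr P)) g}) := by
        rw [pr_eq_uniformOn_real]
        congr 1
        ext g
        simp only [Set.mem_ofPred_eq, Set.mem_union, Pi.neg_apply, le_abs', ← mul_neg,
          mul_le_mul_iff_right₀ hN, le_neg (b := ε), or_comm]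
    _ ≤ exp (-(N * ε) ^ 2 / (2 * (Fintype.card S / 4 : NNReal)))
        + exp (-(N * ε) ^ 2 / (2 * (Fintype.card S / 4 : NNReal))) :=
        (measureReal_union_le _ _).trans
          (add_le_add (h.measure_ge_le (by positivity)) (h.neg.measure_ge_le (by positivity)))
    _ = 2 * exp (-2 * N * ε ^ 2) := by
        push_cast
        rw [← two_mul]
        congr 2
        field_simp
        ring

lemma exists_forall_not_of_sum_pr_lt_one {α ι : Type*} [Fintype α] [Nonempty α] [Fintype ι]
    (P : ι → α → Prop) (h : ∑ i, pr (P i) < 1) : ∃ x, ∀ i, ¬ P i x := by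
  by_contra! hP
  have hcover : (univ : Finset α) ⊆ univ.biUnion fun i => univ.filter (P i) := fun x _ => by
    simpa using hP x
  have hcard : (Fintype.card α : ℝ) ≤ ∑ i, ((univ.filter (P i)).card : ℝ) := by
    exact_mod_cast (card_le_card hcover).trans card_biUnion_le
  simp only [pr, ← sum_div] at h
  rw [div_lt_one (by positivity)] at h
  linarith

lemma exists_forall_abs_pr_comp_sub_pr_lt [Nonempty S] {ι : Type*} [Fintype ι]
    (P : ι → D → Prop) {ε : ℝ} (hε : 0 ≤ ε)
    (h : 2 * Fintype.card ι * exp (-2 * Fintype.card S * ε ^ 2) < 1) :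
    ∃ g : S → D, ∀ i, |pr (fun x => P i (g x)) - pr (P i)| < ε := by
  obtain ⟨g, hg⟩ := exists_forall_not_of_sum_pr_lt_one
    (fun i (g : S → D) => ε ≤ |pr (fun x => P i (g x)) - pr (P i)|) <| calc
      _ ≤ ∑ _i : ι, 2 * exp (-2 * Fintype.card S * ε ^ 2) :=
        sum_le_sum fun i _ => pr_le_abs_pr_comp_sub_pr (P i) hε
      _ < 1 := by rwa [sum_const, card_univ, nsmul_eq_mul, ← mul_assoc, mul_comm _ (2 : ℝ)]
  exact ⟨g, fun i => not_le.mp (hg i)⟩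

end EmpiricalFrequency

abbrev BlockDecisionTree (A I : Type*) (k : ℕ) : Type _ := (i : Fin k) → (Fin i → A) → I → A

namespace BlockDecisionTree

variable {A I : Type*} {k : ℕ}

def ofNodeFun (v : List A → I → A) : BlockDecisionTree A I k := fun _ w X => v (List.ofFn w) X

def nodeFun (a₀ : A) (t : BlockDecisionTree A I k) (w : List A) (X : I) : A :=
  if h : w.length < k then t ⟨w.length, h⟩ w.get X else a₀

lemma nodeFun_ofNodeFun (a₀ : A) (v : List A → I → A) {w : List A} (hw : w.length < k) (X : I) :
    (ofNodeFun v : BlockDecisionTree A I k).nodeFun a₀ w X = v w X := by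
  simp [nodeFun, ofNodeFun, hw]

lemma card_le [Fintype A] [Fintype I] (hA : 2 ≤ Fintype.card A) :
    Fintype.card (BlockDecisionTree A I k)
      ≤ Fintype.card A ^ (Fintype.card I * Fintype.card A ^ k) := by
  rw [Fintype.card_pi]
  simp only [Fintype.card_fun, Fintype.card_fin]
  rw [prod_congr rfl fun i _ => (pow_mul ..).symm, prod_pow_eq_pow_sum, ← mul_sum,
    Fin.sum_univ_eq_sum_range (Fintype.card A ^ ·)]
  exact Nat.pow_le_pow_right (by omega) <| Nat.mul_le_mul_left _ <|
    (Nat.geomSum_lt hA fun _ => mem_range.mp).le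

end BlockDecisionTree

lemma foldl_append_congr {A I : Type*} {k : ℕ} {v v' : List A → I → A}
    (h : ∀ w X, w.length < k → v w X = v' w X) :
    ∀ (Xs : List I) (w₀ : List A), w₀.length + Xs.length ≤ k →
      Xs.foldl (fun w X => w ++ [v w X]) w₀ = Xs.foldl (fun w X => w ++ [v' w X]) w₀
  | [], _, _ => rfl
  | X :: Xs, w₀, hlen => by
    simp only [List.length_cons] at hlen
    rw [List.foldl_cons, List.foldl_cons, h w₀ X (by omega)]
    exact foldl_append_congr h Xs _ (by simp; omega)

lemma treeOutList_congr {A I : Type*} {k : ℕ} {v v' : List A → I → A}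
    (h : ∀ w X, w.length < k → v w X = v' w X) {Xs : List I} (hXs : Xs.length = k) :
    treeOutList v Xs = treeOutList v' Xs :=
  foldl_append_congr h Xs [] (by simp [hXs])

theorem exists_isBDTPRG_of_union_bound {n k s : ℕ} {A : Type*} [Fintype A] [Nonempty A] {γ : ℝ}
    (hγ : 0 ≤ γ)
    (h : 2 * Fintype.card (BlockDecisionTree A (Fin n → Bool) k × (Fin k → A))
      * exp (-2 * 2 ^ s * (2 * γ / Fintype.card A ^ k) ^ 2) < 1) :
    ∃ Gen, IsBDTPRG n k s A γ Gen := by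
  obtain ⟨a₀⟩ := ‹Nonempty A›
  obtain ⟨Gen, hGen⟩ := exists_forall_abs_pr_comp_sub_pr_lt (S := Fin s → Bool)
    (fun (tσ : BlockDecisionTree A (Fin n → Bool) k × (Fin k → A)) (X : Fin k → Fin n → Bool) =>
      treeOutList (tσ.1.nodeFun a₀) (List.ofFn X) = List.ofFn tσ.2)
    (ε := 2 * γ / Fintype.card A ^ k) (by positivity)
    (by rwa [Fintype.card_fun, Fintype.card_bool, Fintype.card_fin, Nat.cast_pow, Nat.cast_two])
  refine ⟨Gen, fun v => ?_⟩
  have hv (X : Fin k → Fin n → Bool) : treeOutList v (List.ofFn X)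
      = treeOutList ((BlockDecisionTree.ofNodeFun v).nodeFun a₀) (List.ofFn X) :=
    treeOutList_congr (fun w Y hw => (BlockDecisionTree.nodeFun_ofNodeFun a₀ v hw Y).symm)
      (List.length_ofFn)
  calc _ ≤ (1 / 2) * ∑ _σ : Fin k → A, 2 * γ / Fintype.card A ^ k := by
        gcongr with σ
        simp only [hv]
        exact (hGen (BlockDecisionTree.ofNodeFun v, σ)).le
    _ = γ := by
        rw [sum_const, card_univ, Fintype.card_fun, Fintype.card_fin, nsmul_eq_mul]
        push_cast
        field_simp

lemma one_add_mul_add_le {n k a : ℕ} (ha : 1 < a) (hk : 0 < k) :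
    1 + a * (2 ^ n * a ^ k + k) ≤ 3 * (2 ^ n * a ^ (2 * k)) := by
  have hpow : a ^ (k + 1) ≤ 2 ^ n * a ^ (2 * k) :=
    (Nat.pow_le_pow_right ha.le (by omega)).trans (Nat.le_mul_of_pos_left _ (by positivity))
  have h1 : 1 ≤ 2 ^ n * a ^ (2 * k) := Nat.one_le_iff_ne_zero.mpr (by positivity)
  have h2 : a * (2 ^ n * a ^ k) ≤ 2 ^ n * a ^ (2 * k) := by
    rw [mul_left_comm, ← pow_succ']
    exact Nat.mul_le_mul_left _ (Nat.pow_le_pow_right ha.le (by omega))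
  have h3 : a * k ≤ 2 ^ n * a ^ (2 * k) := calc
    a * k ≤ a * a ^ k := Nat.mul_le_mul_left _ (Nat.lt_pow_self ha).le
    _ ≤ 2 ^ n * a ^ (2 * k) := by rw [← pow_succ']; exact hpow
  rw [mul_add]
  linarith

lemma two_mul_mul_exp_neg_lt_one {n k a T : ℕ} {M γ : ℝ} (ha : 1 < a) (hk : 0 < k)
    (hT : T ≤ a ^ (2 ^ n * a ^ k + k)) (hM : 2 ^ n * (a : ℝ) ^ (4 * k) ≤ M * γ ^ 2) :
    2 * T * exp (-2 * M * (2 * γ / a ^ k) ^ 2) < 1 := by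
  have ha' : (0 : ℝ) < a := by positivity
  have hexp : 2 * (T : ℝ) ≤ exp (1 + a * (2 ^ n * a ^ k + k)) := calc
    2 * (T : ℝ) ≤ 2 * (a : ℝ) ^ (2 ^ n * a ^ k + k) := by gcongr; exact_mod_cast hT
    _ ≤ exp 1 * exp a ^ (2 ^ n * a ^ k + k) := by
      gcongr
      · linarith [add_one_le_exp 1]
      · linarith [add_one_le_exp (a : ℝ)]
    _ = exp (1 + a * (2 ^ n * a ^ k + k)) := by
      rw [← exp_nat_mul, ← exp_add]; push_cast; ring_nf
  have hlt : (1 + a * (2 ^ n * a ^ k + k)) * (a : ℝ) ^ (2 * k) < 8 * (M * γ ^ 2) := calc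
    (1 + a * (2 ^ n * a ^ k + k)) * (a : ℝ) ^ (2 * k)
        ≤ 3 * (2 ^ n * (a : ℝ) ^ (2 * k)) * (a : ℝ) ^ (2 * k) := by
      gcongr; exact_mod_cast one_add_mul_add_le (n := n) ha hk
    _ = 3 * (2 ^ n * (a : ℝ) ^ (4 * k)) := by ring
    _ < 8 * (M * γ ^ 2) := by linarith [show (0 : ℝ) < 2 ^ n * (a : ℝ) ^ (4 * k) by positivity]
  have hexponent : 2 * M * (2 * γ / a ^ k) ^ 2 = 8 * (M * γ ^ 2) / (a : ℝ) ^ (2 * k) := by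
    field_simp; ring
  rw [neg_mul, neg_mul, exp_neg, ← div_eq_mul_inv, div_lt_one (exp_pos _), hexponent]
  exact hexp.trans_lt (exp_lt_exp.mpr ((lt_div_iff₀ (by positivity)).mpr hlt))

lemma le_two_pow_ceil_logb {x : ℝ} (hx : 0 < x) : x ≤ 2 ^ ⌈logb 2 x⌉₊ := calc
  x = 2 ^ logb 2 x := (rpow_logb (by norm_num) (by norm_num) hx).symm
  _ ≤ 2 ^ (⌈logb 2 x⌉₊ : ℝ) := rpow_le_rpow_of_exponent_le (by norm_num) (Nat.le_ceil _)
  _ = 2 ^ ⌈logb 2 x⌉₊ := rpow_natCast _ _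

noncomputable def seedLength (n k : ℕ) (a γ : ℝ) : ℕ :=
  n + 4 * k * ⌈logb 2 a⌉₊ + 2 * ⌈logb 2 (1 / γ)⌉₊

lemma two_pow_mul_pow_le_two_pow_seedLength_mul_sq {n k : ℕ} {a γ : ℝ} (ha : 0 < a)
    (hγ : 0 < γ) :
    2 ^ n * a ^ (4 * k) ≤ 2 ^ seedLength n k a γ * γ ^ 2 := by
  have hγ' : 1 ≤ 2 ^ ⌈logb 2 (1 / γ)⌉₊ * γ := by
    rw [← div_le_iff₀ hγ]; exact le_two_pow_ceil_logb (by positivity)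
  calc 2 ^ n * a ^ (4 * k)
        ≤ 2 ^ n * (2 ^ ⌈logb 2 a⌉₊) ^ (4 * k) * (2 ^ ⌈logb 2 (1 / γ)⌉₊ * γ) ^ 2 := by
        rw [← mul_one (2 ^ n * a ^ (4 * k))]
        gcongr
        · exact le_two_pow_ceil_logb ha
        · exact one_le_pow₀ hγ'
    _ = 2 ^ seedLength n k a γ * γ ^ 2 := by
        simp only [seedLength, pow_add, mul_pow, ← pow_mul]; ring_nf

lemma seedLength_le {n k : ℕ} {a γ : ℝ} (ha : 2 ≤ a) (hk : 0 < k) (hγ₀ : 0 < γ) (hγ₁ : γ ≤ 1) :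
    (seedLength n k a γ : ℝ)
      ≤ n + 8 * (k * logb 2 a + (1 + logb 2 k) * (1 + logb 2 (1 / γ))) := by
  have hloga : 1 ≤ logb 2 a := by
    rw [le_logb_iff_rpow_le (by norm_num) (by positivity), rpow_one]; exact ha
  have hlogk : 0 ≤ logb 2 k := logb_nonneg (by norm_num) (by exact_mod_cast hk)
  have hlogγ : 0 ≤ logb 2 (1 / γ) := logb_nonneg (by norm_num) (one_le_one_div hγ₀ hγ₁)
  have hL := Nat.ceil_lt_add_one (show 0 ≤ logb 2 a by linarith)
  have ht := Nat.ceil_lt_add_one hlogγ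
  simp only [seedLength]
  push_cast
  nlinarith [mul_le_mul_of_nonneg_left hL.le (by positivity : (0 : ℝ) ≤ k),
    mul_nonneg hlogk hlogγ]

/-- there is an absolute constant `C > 0` such that for all positive
`n, k`, every finite alphabet with at least two symbols, and every `0 < γ ≤ 1`,
there is a `γ`-PRG for `(k,n,Σ)` block decision trees with seed length
`s ≤ n + C·(k·log₂|Σ| + (1+log₂ k)·(1+log₂(1/γ)))`. -/
theorem bdt_prg :
    ∃ C : ℝ, 0 < C ∧
      ∀ n k : ℕ, 0 < n → 0 < k →
        ∀ (A : Type) [Fintype A], 2 ≤ Fintype.card A →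
          ∀ γ : ℝ, 0 < γ → γ ≤ 1 →
            ∃ (s : ℕ) (Gen : (Fin s → Bool) → Fin k → (Fin n → Bool)),
              IsBDTPRG n k s A γ Gen ∧
              (s : ℝ) ≤ n + C * (k * Real.logb 2 (Fintype.card A : ℝ) +
                (1 + Real.logb 2 (k : ℝ)) * (1 + Real.logb 2 (1 / γ))) := by
  refine ⟨8, by norm_num, fun n k _ hk A _ hA γ hγ₀ hγ₁ => ?_⟩
  have : Nonempty A := Fintype.card_pos_iff.mp (by omega)
  have hcard : Fintype.card (BlockDecisionTree A (Fin n → Bool) k × (Fin k → A))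
      ≤ Fintype.card A ^ (2 ^ n * Fintype.card A ^ k + k) := by
    rw [Fintype.card_prod, Fintype.card_fun, Fintype.card_fin, pow_add]
    simpa using Nat.mul_le_mul_right _ (BlockDecisionTree.card_le (I := Fin n → Bool) (k := k) hA)
  obtain ⟨Gen, hGen⟩ := exists_isBDTPRG_of_union_bound (s := seedLength n k (Fintype.card A) γ)
    hγ₀.le <| two_mul_mul_exp_neg_lt_one hA hk hcard <|
      two_pow_mul_pow_le_two_pow_seedLength_mul_sq (by positivity) hγ₀
  exact ⟨_, Gen, hGen, seedLength_le (by exact_mod_cast hA) hk hγ₀ hγ₁⟩
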